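/- Let k be a field and Π = Π_k(k[s,t]/(s^2,t^2)) as presented by generators a,s,t,e,f and the relations above. The elements u = sef + efs + fse and v = tef + eft + fte satisfy: u is normalizing for the automorphism σ of Π fixing a,s,e,f and sending t ↦ −t (i.e. ux = σ(x)u for all x), and consequently A := u^2 and B := v^2 are central elements of Π of degree 4. -/

import Mathlib

set_option synthInstance.maxHeartbeats 1000000
set_option maxHeartbeats 1000000

noncomputable section

/-- Generators `a, s, t, e, f` of the generalized preprojective algebra
`Π_k(k[s,t]/(s²,t²))`. -/
inductive Gen5 : Type
  | a | s | t | e | f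
deriving DecidableEq

variable (k : Type) [Field k]

/-- The image of a generator in the free algebra. -/
def g5 (x : Gen5) : FreeAlgebra k Gen5 := FreeAlgebra.ι k x

open Gen5 in
/-- The defining relations of `Π_k(k[s,t]/(s²,t²))`:
`s² = t² = st − ts = 0`, `a² = a`, `as = sa = at = ta = 0`, `ea = e`, `af = f`,
`ae = fa = 0`, `es = et = sf = tf = 0`, `fe = 0`, and
`efst + seft + tefs + stef = 0`. -/
inductive Rel5 : FreeAlgebra k Gen5 → FreeAlgebra k Gen5 → Prop
  | ss : Rel5 (g5 k s * g5 k s) 0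
  | tt : Rel5 (g5 k t * g5 k t) 0
  | st : Rel5 (g5 k s * g5 k t) (g5 k t * g5 k s)
  | aa : Rel5 (g5 k a * g5 k a) (g5 k a)
  | as : Rel5 (g5 k a * g5 k s) 0
  | sa : Rel5 (g5 k s * g5 k a) 0
  | at : Rel5 (g5 k a * g5 k t) 0
  | ta : Rel5 (g5 k t * g5 k a) 0
  | ea : Rel5 (g5 k e * g5 k a) (g5 k e)
  | af : Rel5 (g5 k a * g5 k f) (g5 k f)
  | ae : Rel5 (g5 k a * g5 k e) 0
  | fa : Rel5 (g5 k f * g5 k a) 0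
  | es : Rel5 (g5 k e * g5 k s) 0
  | et : Rel5 (g5 k e * g5 k t) 0
  | sf : Rel5 (g5 k s * g5 k f) 0
  | tf : Rel5 (g5 k t * g5 k f) 0
  | fe : Rel5 (g5 k f * g5 k e) 0
  | pre : Rel5 (g5 k e * g5 k f * g5 k s * g5 k t + g5 k s * g5 k e * g5 k f * g5 k t +
      g5 k t * g5 k e * g5 k f * g5 k s + g5 k s * g5 k t * g5 k e * g5 k f) 0

/-- The generalized preprojective algebra `Π_k(k[s,t]/(s²,t²))`. -/
def Pi5 := RingQuot (Rel5 k)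

instance : Ring (Pi5 k) := by unfold Pi5; infer_instance
instance : Algebra k (Pi5 k) := by unfold Pi5; infer_instance

/-- Degrees: `a, s, t` have degree `0`, `e, f` degree `1`. -/
def deg5 : Gen5 → ℕ
  | .a | .s | .t => 0
  | .e | .f => 1

/-- The degree-`d` component of `Π_k(k[s,t]/(s²,t²))`: the `k`-span of (images of) words
with `d` occurrences of `e, f` in total. -/
def Pi5Comp (d : ℕ) : Submodule k (Pi5 k) :=
  Submodule.span k
    {z | ∃ l : List Gen5, (l.map deg5).sum = d ∧
      z = (l.map fun x => RingQuot.mkAlgHom k (Rel5 k) (g5 k x)).prod}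

/-- The image of a generator in `Π_k(k[s,t]/(s²,t²))`. -/
def G5 (x : Gen5) : Pi5 k := RingQuot.mkAlgHom k (Rel5 k) (g5 k x)

/-- `u = sef + efs + fse`. -/
def uElt : Pi5 k := G5 k .s * G5 k .e * G5 k .f + G5 k .e * G5 k .f * G5 k .s +
  G5 k .f * G5 k .s * G5 k .e

/-- `v = tef + eft + fte`. -/
def vElt : Pi5 k := G5 k .t * G5 k .e * G5 k .f + G5 k .e * G5 k .f * G5 k .t +
  G5 k .f * G5 k .t * G5 k .e

/-!
Every relation of `Π` is homogeneous in `t`, the preprojective one being odd in `t`, so `t ↦ -t`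
extends to an involutive automorphism `σ`; likewise swapping `s` and `t` gives an automorphism `ρ`
with `ρ u = v`. On generators, `u` commutes with `a, s, e, f` by the monomial relations, while
`u t + t u` is exactly the preprojective relation; hence `u x = σ(x) u` for all `x`. Then
`x u² = u σ(x) u = u² x` because `σ² = 1`, so `u²` is central, and so is `v² = ρ(u²)`.
-/

theorem sq_mem_center_of_mul_eq_mul {R A : Type*} [CommSemiring R] [Semiring A] [Algebra R A]
    {σ : A → A} (hσ : Function.Involutive σ) {u : A} (hu : ∀ x, u * x = σ x * u) :
    u ^ 2 ∈ Subalgebra.center R A := by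
  refine Subalgebra.mem_center_iff.mpr fun x => ?_
  calc x * u ^ 2 = x * u * u := by rw [sq, mul_assoc]
    _ = u * σ x * u := by rw [hu (σ x), hσ x]
    _ = u ^ 2 * x := by rw [mul_assoc, ← hu x, ← mul_assoc, sq]

namespace Pi5

open Gen5

-- `RingQuot.mkAlgHom` with codomain `Pi5 k`, so that `map_mul` yields products in `Pi5 k`
-- rather than in `RingQuot (Rel5 k)` (whose instances agree only up to unfolding).
def mk : FreeAlgebra k Gen5 →ₐ[k] Pi5 k := RingQuot.mkAlgHom k (Rel5 k)

@[simp] theorem mk_g5 (x : Gen5) : mk k (g5 k x) = G5 k x := rfl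

theorem mk_eq_mk_of_rel {x y : FreeAlgebra k Gen5} (h : Rel5 k x y) : mk k x = mk k y :=
  RingQuot.mkAlgHom_rel k h

@[simp] theorem s_mul_s : G5 k s * G5 k s = 0 := by simpa using mk_eq_mk_of_rel k .ss
@[simp] theorem t_mul_t : G5 k t * G5 k t = 0 := by simpa using mk_eq_mk_of_rel k .tt
@[simp] theorem t_mul_s : G5 k t * G5 k s = G5 k s * G5 k t := by
  simpa using (mk_eq_mk_of_rel k .st).symm
@[simp] theorem a_mul_a : G5 k a * G5 k a = G5 k a := by simpa using mk_eq_mk_of_rel k .aa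
@[simp] theorem a_mul_s : G5 k a * G5 k s = 0 := by simpa using mk_eq_mk_of_rel k .as
@[simp] theorem s_mul_a : G5 k s * G5 k a = 0 := by simpa using mk_eq_mk_of_rel k .sa
@[simp] theorem a_mul_t : G5 k a * G5 k t = 0 := by simpa using mk_eq_mk_of_rel k .at
@[simp] theorem t_mul_a : G5 k t * G5 k a = 0 := by simpa using mk_eq_mk_of_rel k .ta
@[simp] theorem e_mul_a : G5 k e * G5 k a = G5 k e := by simpa using mk_eq_mk_of_rel k .ea
@[simp] theorem a_mul_f : G5 k a * G5 k f = G5 k f := by simpa using mk_eq_mk_of_rel k .af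
@[simp] theorem a_mul_e : G5 k a * G5 k e = 0 := by simpa using mk_eq_mk_of_rel k .ae
@[simp] theorem f_mul_a : G5 k f * G5 k a = 0 := by simpa using mk_eq_mk_of_rel k .fa
@[simp] theorem e_mul_s : G5 k e * G5 k s = 0 := by simpa using mk_eq_mk_of_rel k .es
@[simp] theorem e_mul_t : G5 k e * G5 k t = 0 := by simpa using mk_eq_mk_of_rel k .et
@[simp] theorem s_mul_f : G5 k s * G5 k f = 0 := by simpa using mk_eq_mk_of_rel k .sf
@[simp] theorem t_mul_f : G5 k t * G5 k f = 0 := by simpa using mk_eq_mk_of_rel k .tf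
@[simp] theorem f_mul_e : G5 k f * G5 k e = 0 := by simpa using mk_eq_mk_of_rel k .fe

theorem preprojective_rel : G5 k e * (G5 k f * (G5 k s * G5 k t)) +
    G5 k s * (G5 k e * (G5 k f * G5 k t)) + G5 k t * (G5 k e * (G5 k f * G5 k s)) +
    G5 k s * (G5 k t * (G5 k e * G5 k f)) = 0 := by
  simpa [mul_assoc] using mk_eq_mk_of_rel k .pre

@[simp] theorem e_mul_e : G5 k e * G5 k e = 0 := by
  nth_rw 1 [← e_mul_a k]; rw [mul_assoc, a_mul_e, mul_zero]

@[simp] theorem f_mul_f : G5 k f * G5 k f = 0 := by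
  nth_rw 2 [← a_mul_f k]; rw [← mul_assoc, f_mul_a, zero_mul]

-- Right-associated forms, so that `simp [mul_assoc]` applies the relations inside monomials.
section Assoc

variable (z : Pi5 k)

@[simp] theorem s_mul_s_assoc : G5 k s * (G5 k s * z) = 0 := by simp [← mul_assoc]
@[simp] theorem t_mul_s_assoc : G5 k t * (G5 k s * z) = G5 k s * (G5 k t * z) := by
  simp [← mul_assoc]
@[simp] theorem a_mul_s_assoc : G5 k a * (G5 k s * z) = 0 := by simp [← mul_assoc]
@[simp] theorem a_mul_f_assoc : G5 k a * (G5 k f * z) = G5 k f * z := by simp [← mul_assoc]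
@[simp] theorem a_mul_e_assoc : G5 k a * (G5 k e * z) = 0 := by simp [← mul_assoc]
@[simp] theorem e_mul_s_assoc : G5 k e * (G5 k s * z) = 0 := by simp [← mul_assoc]
@[simp] theorem s_mul_f_assoc : G5 k s * (G5 k f * z) = 0 := by simp [← mul_assoc]
@[simp] theorem t_mul_f_assoc : G5 k t * (G5 k f * z) = 0 := by simp [← mul_assoc]
@[simp] theorem f_mul_e_assoc : G5 k f * (G5 k e * z) = 0 := by simp [← mul_assoc]
@[simp] theorem e_mul_e_assoc : G5 k e * (G5 k e * z) = 0 := by simp [← mul_assoc]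
@[simp] theorem f_mul_f_assoc : G5 k f * (G5 k f * z) = 0 := by simp [← mul_assoc]

end Assoc

theorem mk_surjective : Function.Surjective (mk k) :=
  RingQuot.mkAlgHom_surjective k (Rel5 k)

@[elab_as_elim]
theorem induction_on {P : Pi5 k → Prop} (x : Pi5 k) (scalar : ∀ r, P (algebraMap k _ r))
    (gen : ∀ x, P (G5 k x)) (add : ∀ x y, P x → P y → P (x + y))
    (mul : ∀ x y, P x → P y → P (x * y)) : P x := by
  obtain ⟨x, rfl⟩ := mk_surjective k x
  induction x using FreeAlgebra.induction with
  | grade0 r => simpa using scalar r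
  | grade1 x => exact gen x
  | add x y hx hy => simpa using add _ _ hx hy
  | mul x y hx hy => simpa using mul _ _ hx hy

section Lift

variable {A : Type*} [Semiring A] [Algebra k A]

@[simp] theorem freeAlgebraLift_g5 (φ : Gen5 → A) (x : Gen5) :
    FreeAlgebra.lift k φ (g5 k x) = φ x :=
  FreeAlgebra.lift_ι_apply φ x

def lift (φ : Gen5 → A)
    (hφ : ∀ ⦃x y⦄, Rel5 k x y → FreeAlgebra.lift k φ x = FreeAlgebra.lift k φ y) :
    Pi5 k →ₐ[k] A :=
  RingQuot.liftAlgHom k ⟨FreeAlgebra.lift k φ, hφ⟩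

@[simp] theorem lift_G5 (φ : Gen5 → A)
    (hφ : ∀ ⦃x y⦄, Rel5 k x y → FreeAlgebra.lift k φ x = FreeAlgebra.lift k φ y) (x : Gen5) :
    lift k φ hφ (G5 k x) = φ x :=
  (RingQuot.liftAlgHom_mkAlgHom_apply k _ hφ (g5 k x)).trans (freeAlgebraLift_g5 k φ x)

theorem algHom_ext {φ ψ : Pi5 k →ₐ[k] A} (h : ∀ x, φ (G5 k x) = ψ (G5 k x)) : φ = ψ :=
  RingQuot.ringQuot_ext' _ _ _ (FreeAlgebra.hom_ext (funext h))

end Lift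

def algEquivOfInvolutive (φ : Pi5 k →ₐ[k] Pi5 k) (hφ : ∀ x, φ (φ (G5 k x)) = G5 k x) :
    Pi5 k ≃ₐ[k] Pi5 k :=
  AlgEquiv.ofAlgHom φ φ (algHom_ext k hφ) (algHom_ext k hφ)

@[simp] theorem algEquivOfInvolutive_apply (φ : Pi5 k →ₐ[k] Pi5 k)
    (hφ : ∀ x, φ (φ (G5 k x)) = G5 k x) (x : Pi5 k) : algEquivOfInvolutive k φ hφ x = φ x :=
  rfl

theorem algEquivOfInvolutive_involutive (φ : Pi5 k →ₐ[k] Pi5 k)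
    (hφ : ∀ x, φ (φ (G5 k x)) = G5 k x) : Function.Involutive (algEquivOfInvolutive k φ hφ) :=
  AlgHom.congr_fun (algHom_ext k (φ := φ.comp φ) (ψ := AlgHom.id k _) hφ)

def sigmaGen : Gen5 → Pi5 k
  | t => -G5 k t
  | x => G5 k x

def rhoGen : Gen5 → Pi5 k
  | s => G5 k t
  | t => G5 k s
  | x => G5 k x

theorem sigmaGen_rel ⦃x y : FreeAlgebra k Gen5⦄ (h : Rel5 k x y) :
    FreeAlgebra.lift k (sigmaGen k) x = FreeAlgebra.lift k (sigmaGen k) y := by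
  cases h
  case pre =>
    rw [map_zero, ← neg_eq_zero, ← preprojective_rel k]
    simp [sigmaGen, mul_assoc]
    abel
  all_goals simp [sigmaGen]

theorem rhoGen_rel ⦃x y : FreeAlgebra k Gen5⦄ (h : Rel5 k x y) :
    FreeAlgebra.lift k (rhoGen k) x = FreeAlgebra.lift k (rhoGen k) y := by
  cases h
  case pre =>
    rw [map_zero, ← preprojective_rel k]
    simp [rhoGen, mul_assoc]
    abel
  all_goals simp [rhoGen]

def sigma : Pi5 k ≃ₐ[k] Pi5 k :=
  algEquivOfInvolutive k (lift k (sigmaGen k) (sigmaGen_rel k)) fun x => by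
    cases x <;> simp [sigmaGen]

def rho : Pi5 k ≃ₐ[k] Pi5 k :=
  algEquivOfInvolutive k (lift k (rhoGen k) (rhoGen_rel k)) fun x => by
    cases x <;> simp [rhoGen]

@[simp] theorem sigma_G5 (x : Gen5) : sigma k (G5 k x) = sigmaGen k x :=
  lift_G5 k _ _ x

theorem sigma_involutive : Function.Involutive (sigma k) :=
  algEquivOfInvolutive_involutive k _ _

theorem uElt_mul_t : uElt k * G5 k t = -(G5 k t * uElt k) := by
  rw [eq_neg_iff_add_eq_zero, ← preprojective_rel k]
  simp [uElt, mul_add, add_mul, mul_assoc]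
  abel

theorem uElt_mul_G5 (x : Gen5) : uElt k * G5 k x = sigma k (G5 k x) * uElt k := by
  cases x
  case t => simp [uElt_mul_t, sigmaGen]
  all_goals simp [uElt, sigmaGen, mul_add, add_mul, mul_assoc]

theorem uElt_mul (x : Pi5 k) : uElt k * x = sigma k x * uElt k := by
  induction x using induction_on k with
  | scalar r => simp [Algebra.commutes]
  | gen x => exact uElt_mul_G5 k x
  | add x y hx hy => rw [mul_add, hx, hy, map_add, add_mul]
  | mul x y hx hy => rw [← mul_assoc, hx, mul_assoc, hy, map_mul, mul_assoc]

theorem rho_uElt : rho k (uElt k) = vElt k := by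
  simp [uElt, vElt, rho, rhoGen]

theorem G5_mem_Pi5Comp (x : Gen5) : G5 k x ∈ Pi5Comp k (deg5 x) :=
  Submodule.subset_span ⟨[x], by simp, List.prod_singleton.symm⟩

theorem mul_mem_Pi5Comp {m n : ℕ} {x y : Pi5 k} (hx : x ∈ Pi5Comp k m)
    (hy : y ∈ Pi5Comp k n) : x * y ∈ Pi5Comp k (m + n) := by
  have hxy := Submodule.mul_mem_mul hx hy
  rw [Pi5Comp, Pi5Comp, Submodule.span_mul_span] at hxy
  refine Submodule.span_mono ?_ hxy
  rintro _ ⟨_, ⟨l₁, rfl, rfl⟩, _, ⟨l₂, rfl, rfl⟩, rfl⟩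
  exact ⟨l₁ ++ l₂, by simp, by rw [List.map_append, List.prod_append]; rfl⟩

theorem G5_mul_G5_mul_G5_mem_Pi5Comp (x y z : Gen5) :
    G5 k x * G5 k y * G5 k z ∈ Pi5Comp k (deg5 x + deg5 y + deg5 z) :=
  mul_mem_Pi5Comp k (mul_mem_Pi5Comp k (G5_mem_Pi5Comp k x) (G5_mem_Pi5Comp k y))
    (G5_mem_Pi5Comp k z)

theorem uElt_mem_Pi5Comp : uElt k ∈ Pi5Comp k 2 :=
  add_mem (add_mem (G5_mul_G5_mul_G5_mem_Pi5Comp k s e f)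
    (G5_mul_G5_mul_G5_mem_Pi5Comp k e f s)) (G5_mul_G5_mul_G5_mem_Pi5Comp k f s e)

theorem vElt_mem_Pi5Comp : vElt k ∈ Pi5Comp k 2 :=
  add_mem (add_mem (G5_mul_G5_mul_G5_mem_Pi5Comp k t e f)
    (G5_mul_G5_mul_G5_mem_Pi5Comp k e f t)) (G5_mul_G5_mul_G5_mem_Pi5Comp k f t e)

theorem sq_mem_Pi5Comp {n : ℕ} {x : Pi5 k} (hx : x ∈ Pi5Comp k n) :
    x ^ 2 ∈ Pi5Comp k (n + n) :=
  sq x ▸ mul_mem_Pi5Comp k hx hx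

end Pi5

/-- In `Π = Π_k(k[s,t]/(s²,t²))`, there is a `k`-algebra automorphism `σ` fixing
`a, s, e, f` and sending `t ↦ −t`; the element `u = sef + efs + fse` is normalizing with
respect to `σ`, i.e. `u x = σ(x) u` for all `x`; and consequently `A := u²` and `B := v²`
(with `v = tef + eft + fte`) are central elements of `Π` of degree 4. -/
theorem uElt_normalizing :
    ∃ σ : Pi5 k ≃ₐ[k] Pi5 k,
      σ (G5 k .a) = G5 k .a ∧ σ (G5 k .s) = G5 k .s ∧ σ (G5 k .t) = -G5 k .t ∧
      σ (G5 k .e) = G5 k .e ∧ σ (G5 k .f) = G5 k .f ∧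
      (∀ x : Pi5 k, uElt k * x = σ x * uElt k) ∧
      uElt k ^ 2 ∈ Subalgebra.center k (Pi5 k) ∧ uElt k ^ 2 ∈ Pi5Comp k 4 ∧
      vElt k ^ 2 ∈ Subalgebra.center k (Pi5 k) ∧ vElt k ^ 2 ∈ Pi5Comp k 4 := by
  have hu : uElt k ^ 2 ∈ Subalgebra.center k (Pi5 k) :=
    sq_mem_center_of_mul_eq_mul (Pi5.sigma_involutive k) (Pi5.uElt_mul k)
  have hv : vElt k ^ 2 ∈ Subalgebra.center k (Pi5 k) := by
    rw [← Pi5.rho_uElt, ← map_pow]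
    exact MulEquivClass.apply_mem_center (Pi5.rho k) hu
  have hσ := Pi5.sigma_G5 k
  exact ⟨Pi5.sigma k, hσ _, hσ _, hσ _, hσ _, hσ _, Pi5.uElt_mul k,
    hu, Pi5.sq_mem_Pi5Comp (n := 2) k (Pi5.uElt_mem_Pi5Comp k),
    hv, Pi5.sq_mem_Pi5Comp (n := 2) k (Pi5.vElt_mem_Pi5Comp k)⟩
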